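/- Let a > 1, b ∈ ℝ, C₁, C₂ ≥ 0, and D₁, D₂ ∈ ℝ satisfy D₁ − (a−1)b < −1 and D₂ < −1. Then there exists Λ > 0 such that for every Z₀ with 0 < Z₀ < Λ, the ODE initial-value problem Z'(t) + (b/(1+t)) Z(t) = C₁ (1+t)^{D₁} Z(t)^a + C₂ (1+t)^{D₂} Z(t), Z(0) = Z₀, admits a global solution Z : [0,∞) → ℝ with Z(t) > 0 for all t ≥ 0. -/

import Mathlib

/-!
The substitution `W = Z ^ (1 - a)` turns the Bernoulli equation `Z' = P Z + Q Z ^ a`, here with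
`P = -b / (1 + t) + C₂ (1 + t) ^ D₂` and `Q = C₁ (1 + t) ^ D₁`, into the linear equation
`W' = (1 - a) (P W + Q)`. Its integrating factor is
`μ t = (1 + t) ^ (-(a - 1) b) * exp ((a - 1) C₂ ∫₀ᵗ (1 + s) ^ D₂)`, and
`W = (Z₀ ^ (1 - a) - (a - 1) C₁ ∫₀ᵗ (1 + s) ^ D₁ μ s) / μ`.
As `D₂ < -1` the exponential factor is bounded, so the last integrand is
`O((1 + s) ^ (D₁ - (a - 1) b))` and its integral over `[0, ∞)` is finite. Hence the numerator of
`W` stays positive for all time as soon as `Z₀ ^ (1 - a)` exceeds `(a - 1) C₁` times that bound,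
which holds for `Z₀` small since `1 - a < 0`; then `Z = W ^ (1 - a)⁻¹` is a global solution.
-/

open Real Set Topology MeasureTheory

theorem HasDerivAt.div_integratingFactor {μ G : ℝ → ℝ} {p q t : ℝ}
    (hμ : HasDerivAt μ (-p * μ t) t) (hG : HasDerivAt G (μ t * q) t) (hμt : μ t ≠ 0) :
    HasDerivAt (fun s => G s / μ s) (p * (G t / μ t) + q) t := by
  refine (hG.div hμ hμt).congr_deriv ?_
  field_simp
  ring

theorem HasDerivAt.rpow_inv_one_sub {W : ℝ → ℝ} {a P Q t : ℝ} (ha : a ≠ 1) (hWt : 0 < W t)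
    (hW : HasDerivAt W ((1 - a) * (P * W t + Q)) t) :
    HasDerivAt (fun s => W s ^ (1 - a)⁻¹)
      (P * W t ^ (1 - a)⁻¹ + Q * (W t ^ (1 - a)⁻¹) ^ a) t := by
  have ha' : 1 - a ≠ 0 := sub_ne_zero.mpr ha.symm
  have hpow : (W t ^ (1 - a)⁻¹) ^ a = W t ^ ((1 - a)⁻¹ - 1) := by
    rw [← rpow_mul hWt.le]
    congr 1
    field_simp
    ring
  refine (hW.rpow_const (Or.inl hWt.ne')).congr_deriv ?_
  rw [hpow, rpow_sub_one hWt.ne']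
  field_simp

theorem HasDerivAt.bernoulli_of_integratingFactor {μ G : ℝ → ℝ} {a P Q t : ℝ} (ha : a ≠ 1)
    (hμ : HasDerivAt μ ((a - 1) * P * μ t) t) (hG : HasDerivAt G ((1 - a) * μ t * Q) t)
    (hμt : 0 < μ t) (hGt : 0 < G t) :
    HasDerivAt (fun s => (G s / μ s) ^ (1 - a)⁻¹)
      (P * (G t / μ t) ^ (1 - a)⁻¹ + Q * ((G t / μ t) ^ (1 - a)⁻¹) ^ a) t := by
  have hW := HasDerivAt.div_integratingFactor (p := (1 - a) * P) (q := (1 - a) * Q)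
    (hμ.congr_deriv (by ring)) (hG.congr_deriv (by ring)) hμt.ne'
  exact HasDerivAt.rpow_inv_one_sub ha (div_pos hGt hμt) (hW.congr_deriv (by ring))

noncomputable def onePlusRpowIntegral (c t : ℝ) : ℝ :=
  ((1 + t) ^ (c + 1) - 1) / (c + 1)

theorem onePlusRpowIntegral_zero (c : ℝ) : onePlusRpowIntegral c 0 = 0 := by
  simp [onePlusRpowIntegral]

theorem hasDerivAt_onePlusRpowIntegral {c t : ℝ} (hc : c ≠ -1) (ht : -1 < t) :
    HasDerivAt (onePlusRpowIntegral c) ((1 + t) ^ c) t := by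
  have hc' : c + 1 ≠ 0 := by contrapose! hc; linarith
  have h1t : 1 + t ≠ 0 := by linarith
  have h := ((((hasDerivAt_id' t).const_add 1).rpow_const (p := c + 1) (Or.inl h1t)).sub_const 1)
    |>.div_const (c + 1)
  refine h.congr_deriv ?_
  field_simp
  simp

theorem onePlusRpowIntegral_le {c t : ℝ} (hc : c < -1) (ht : -1 < t) :
    onePlusRpowIntegral c t ≤ -(c + 1)⁻¹ := by
  have hpos : 0 < (1 + t) ^ (c + 1) := rpow_pos_of_pos (by linarith) _
  have hc' : c + 1 ≠ 0 := by linarith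
  rw [onePlusRpowIntegral, div_le_iff_of_neg (by linarith), neg_mul, inv_mul_cancel₀ hc']
  linarith

theorem intervalIntegrable_one_add_rpow (c : ℝ) {t : ℝ} (ht : -1 < t) :
    IntervalIntegrable (fun s => (1 + s) ^ c) volume 0 t := by
  refine ContinuousOn.intervalIntegrable fun s hs => ?_
  have h1s : 1 + s ≠ 0 := by
    linarith [show -1 < s from ordConnected_Ioi.uIcc_subset (by norm_num) ht hs]
  exact ((continuous_const_add 1).continuousAt.rpow_const (Or.inl h1s)).continuousWithinAt

theorem integral_one_add_rpow_le {c t : ℝ} (hc : c < -1) (ht : 0 ≤ t) :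
    ∫ s in 0..t, (1 + s) ^ c ≤ -(c + 1)⁻¹ := by
  have ht' : -1 < t := by linarith
  rw [intervalIntegral.integral_eq_sub_of_hasDerivAt (fun s hs => hasDerivAt_onePlusRpowIntegral
      hc.ne (ordConnected_Ioi.uIcc_subset (by norm_num) ht' hs))
    (intervalIntegrable_one_add_rpow c ht'), onePlusRpowIntegral_zero, sub_zero]
  exact onePlusRpowIntegral_le hc ht'

noncomputable def integratingFactor (β κ D t : ℝ) : ℝ :=
  (1 + t) ^ (-β) * exp (κ * onePlusRpowIntegral D t)

section integratingFactor

variable {β κ D t : ℝ}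

theorem integratingFactor_zero : integratingFactor β κ D 0 = 1 := by
  simp [integratingFactor, onePlusRpowIntegral_zero]

theorem integratingFactor_pos (ht : -1 < t) : 0 < integratingFactor β κ D t :=
  mul_pos (rpow_pos_of_pos (by linarith) _) (exp_pos _)

theorem hasDerivAt_integratingFactor (hD : D ≠ -1) (ht : -1 < t) :
    HasDerivAt (integratingFactor β κ D)
      ((-β / (1 + t) + κ * (1 + t) ^ D) * integratingFactor β κ D t) t := by
  have h1t : 0 < 1 + t := by linarith
  have hpow := ((hasDerivAt_id' t).const_add 1).rpow_const (p := -β) (Or.inl h1t.ne')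
  have hexp := ((hasDerivAt_onePlusRpowIntegral hD ht).const_mul κ).exp
  refine (hpow.mul hexp).congr_deriv ?_
  rw [integratingFactor, rpow_sub_one h1t.ne']
  field_simp

theorem integratingFactor_le (hκ : 0 ≤ κ) (hD : D < -1) (ht : -1 < t) :
    integratingFactor β κ D t ≤ exp (κ * -(D + 1)⁻¹) * (1 + t) ^ (-β) := by
  have h1t : 0 < 1 + t := by linarith
  rw [integratingFactor, mul_comm]
  gcongr
  exact onePlusRpowIntegral_le hD ht

theorem continuousAt_rpow_mul_integratingFactor (E : ℝ) (hD : D ≠ -1) (ht : -1 < t) :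
    ContinuousAt (fun s => (1 + s) ^ E * integratingFactor β κ D s) t := by
  have h1t : 1 + t ≠ 0 := by linarith
  exact ((continuous_const_add 1).continuousAt.rpow_const (Or.inl h1t)).mul
    (hasDerivAt_integratingFactor hD ht).continuousAt

theorem intervalIntegrable_rpow_mul_integratingFactor (E : ℝ) (hD : D ≠ -1) (ht : -1 < t) :
    IntervalIntegrable (fun s => (1 + s) ^ E * integratingFactor β κ D s) volume 0 t := by
  refine ContinuousOn.intervalIntegrable fun s hs => ?_
  have hs' : -1 < s := ordConnected_Ioi.uIcc_subset (by norm_num) ht hs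
  exact (continuousAt_rpow_mul_integratingFactor E hD hs').continuousWithinAt

theorem hasDerivAt_integral_rpow_mul_integratingFactor (E : ℝ) (hD : D ≠ -1) (ht : -1 < t) :
    HasDerivAt (fun t => ∫ s in 0..t, (1 + s) ^ E * integratingFactor β κ D s)
      ((1 + t) ^ E * integratingFactor β κ D t) t :=
  intervalIntegral.integral_hasDerivAt_right
    (intervalIntegrable_rpow_mul_integratingFactor E hD ht)
    (ContinuousAt.stronglyMeasurableAtFilter isOpen_Ioi
      (fun _ hs => continuousAt_rpow_mul_integratingFactor E hD hs) t ht)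
    (continuousAt_rpow_mul_integratingFactor E hD ht)

theorem integral_rpow_mul_integratingFactor_le {E : ℝ} (hκ : 0 ≤ κ) (hD : D < -1)
    (hE : E - β < -1) (ht : 0 ≤ t) :
    ∫ s in 0..t, (1 + s) ^ E * integratingFactor β κ D s ≤
      exp (κ * -(D + 1)⁻¹) * -(E - β + 1)⁻¹ := by
  calc ∫ s in 0..t, (1 + s) ^ E * integratingFactor β κ D s
      ≤ ∫ s in 0..t, exp (κ * -(D + 1)⁻¹) * (1 + s) ^ (E - β) := by
        refine intervalIntegral.integral_mono_on ht
          (intervalIntegrable_rpow_mul_integratingFactor E hD.ne (by linarith)) ?_ fun s hs => ?_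
        · exact (intervalIntegrable_one_add_rpow _ (by linarith)).const_mul _
        · have h1s : 0 < 1 + s := by linarith [hs.1]
          rw [sub_eq_add_neg, rpow_add h1s, mul_left_comm]
          exact mul_le_mul_of_nonneg_left (integratingFactor_le hκ hD (by linarith)) (by positivity)
    _ = exp (κ * -(D + 1)⁻¹) * ∫ s in 0..t, (1 + s) ^ (E - β) :=
        intervalIntegral.integral_const_mul _ _
    _ ≤ exp (κ * -(D + 1)⁻¹) * -(E - β + 1)⁻¹ := by
        gcongr
        exact integral_one_add_rpow_le hE ht

end integratingFactor

theorem exists_pos_forall_lt_rpow_of_neg {p : ℝ} (hp : p < 0) (A : ℝ) :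
    ∃ Λ > (0 : ℝ), ∀ z, 0 < z → z < Λ → A < z ^ p := by
  have hA : ∀ᶠ z in 𝓝[>] (0 : ℝ), A < z ^ p :=
    (tendsto_rpow_neg_nhdsGT_zero hp).eventually_gt_atTop A
  obtain ⟨Λ, hΛ, hsub⟩ := mem_nhdsGT_iff_exists_Ioo_subset.mp hA
  exact ⟨Λ, hΛ, fun z hz hzΛ => hsub ⟨hz, hzΛ⟩⟩

theorem stmt_3 (a b C₁ C₂ D₁ D₂ : ℝ) (ha : 1 < a) (hC₁ : 0 ≤ C₁) (hC₂ : 0 ≤ C₂)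
    (hD₁ : D₁ - (a - 1) * b < -1) (hD₂ : D₂ < -1) :
    ∃ Λ > (0:ℝ), ∀ Z₀ : ℝ, 0 < Z₀ → Z₀ < Λ →
      ∃ Z : ℝ → ℝ, Z 0 = Z₀ ∧ (∀ t ≥ (0:ℝ), 0 < Z t) ∧
        ∀ t ≥ (0:ℝ), HasDerivAt Z
          (-(b / (1 + t)) * Z t + C₁ * (1 + t) ^ D₁ * Z t ^ a
            + C₂ * (1 + t) ^ D₂ * Z t) t := by
  let μ := integratingFactor ((a - 1) * b) ((a - 1) * C₂) D₂
  let J : ℝ → ℝ := fun t => ∫ s in 0..t, (1 + s) ^ D₁ * μ s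
  let K := exp ((a - 1) * C₂ * -(D₂ + 1)⁻¹) * -(D₁ - (a - 1) * b + 1)⁻¹
  have hJ_le (t : ℝ) (ht : 0 ≤ t) : J t ≤ K :=
    integral_rpow_mul_integratingFactor_le (by nlinarith) hD₂ hD₁ ht
  obtain ⟨Λ, hΛ, hsmall⟩ := exists_pos_forall_lt_rpow_of_neg (p := 1 - a) (by linarith)
    ((a - 1) * C₁ * K)
  refine ⟨Λ, hΛ, fun Z₀ hZ₀ hZ₀Λ => ?_⟩
  let G : ℝ → ℝ := fun t => Z₀ ^ (1 - a) + (1 - a) * C₁ * J t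
  have hG_pos (t : ℝ) (ht : 0 ≤ t) : 0 < G t := by
    have hC₁J : (a - 1) * C₁ * J t ≤ (a - 1) * C₁ * K :=
      mul_le_mul_of_nonneg_left (hJ_le t ht) (by nlinarith)
    linarith [hsmall Z₀ hZ₀ hZ₀Λ]
  have hμ_pos (t : ℝ) (ht : 0 ≤ t) : 0 < μ t := integratingFactor_pos (by linarith)
  refine ⟨fun t => (G t / μ t) ^ (1 - a)⁻¹, ?_,
    fun t ht => rpow_pos_of_pos (div_pos (hG_pos t ht) (hμ_pos t ht)) _, fun t ht => ?_⟩
  · simp [G, J, μ, integratingFactor_zero, rpow_rpow_inv hZ₀.le (sub_ne_zero.mpr ha.ne)]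
  have ht' : -1 < t := by linarith
  have hμ : HasDerivAt μ ((-((a - 1) * b) / (1 + t) + (a - 1) * C₂ * (1 + t) ^ D₂) * μ t) t :=
    hasDerivAt_integratingFactor hD₂.ne ht'
  have hJ : HasDerivAt J ((1 + t) ^ D₁ * μ t) t :=
    hasDerivAt_integral_rpow_mul_integratingFactor D₁ hD₂.ne ht'
  refine (HasDerivAt.bernoulli_of_integratingFactor ha.ne'
    (P := -(b / (1 + t)) + C₂ * (1 + t) ^ D₂) (Q := C₁ * (1 + t) ^ D₁)
    (hμ.congr_deriv (by ring)) (((hJ.const_mul _).const_add _).congr_deriv (by ring))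
    (hμ_pos t ht) (hG_pos t ht)).congr_deriv (by ring)
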